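/- Let Γ and E be real N×T matrices with rank(Γ) ≤ R, and suppose Γ̂ minimizes ‖Γ + E − G‖_F² over all real N×T matrices G with rank(G) ≤ R. Then ‖Γ̂ − Γ‖_F ≤ 2 √(2R) · s_1(E) and ‖Γ̂ − Γ‖_* ≤ 4R · s_1(E). -/

import Mathlib

open scoped BigOperators

noncomputable section

/-- Frobenius inner product of two real `N × T` matrices. -/
def finner {N T : ℕ} (A B : Matrix (Fin N) (Fin T) ℝ) : ℝ :=
  ∑ i, ∑ t, A i t * B i t

/-- Frobenius norm of a real `N × T` matrix. -/
def fnorm {N T : ℕ} (A : Matrix (Fin N) (Fin T) ℝ) : ℝ :=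
  Real.sqrt (finner A A)

/-- The `j`-th singular value (0-indexed, in decreasing order) of a real `N × T` matrix:
the square root of the `j`-th largest eigenvalue of `A * Aᵀ`; `0` for `j ≥ N`. -/
def sval {N T : ℕ} (A : Matrix (Fin N) (Fin T) ℝ) (j : ℕ) : ℝ :=
  if h : j < N then
    Real.sqrt
      ((Matrix.isHermitian_mul_conjTranspose_self A).eigenvalues
        (Tuple.sort ((Matrix.isHermitian_mul_conjTranspose_self A).eigenvalues)
          ((⟨j, h⟩ : Fin N).rev)))
  else 0

/-- Spectral norm: the largest singular value. -/
def s1 {N T : ℕ} (A : Matrix (Fin N) (Fin T) ℝ) : ℝ := sval A 0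

/-- Nuclear norm: the sum of the singular values. -/
def nucNorm {N T : ℕ} (A : Matrix (Fin N) (Fin T) ℝ) : ℝ :=
  ∑ j ∈ Finset.range N, sval A j

/-!
Write `Δ = Γ̂ - Γ`. Since `Γ` is itself a feasible competitor, minimality of `Γ̂` gives the basic
inequality `‖Δ‖_F² ≤ 2 ⟨Δ, E⟩_F`. Trace duality bounds `⟨Δ, E⟩_F ≤ ‖Δ‖_* s₁(E)`, and as
`rank Δ ≤ 2R`, Cauchy–Schwarz over the at most `2R` nonzero singular values gives
`‖Δ‖_* ≤ √(2R) ‖Δ‖_F`. Together, `‖Δ‖_F² ≤ 2 √(2R) s₁(E) ‖Δ‖_F`, which is the Frobenius bound;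
inserting it into `‖Δ‖_* ≤ √(2R) ‖Δ‖_F` gives the nuclear-norm bound.
-/

open Matrix

section Frobenius

variable {N T : ℕ}

lemma finner_comm (A B : Matrix (Fin N) (Fin T) ℝ) : finner A B = finner B A := by
  simp only [finner, mul_comm]

lemma finner_self_nonneg (A : Matrix (Fin N) (Fin T) ℝ) : 0 ≤ finner A A :=
  Finset.sum_nonneg fun _ _ => Finset.sum_nonneg fun _ _ => mul_self_nonneg _

lemma fnorm_nonneg (A : Matrix (Fin N) (Fin T) ℝ) : 0 ≤ fnorm A :=
  Real.sqrt_nonneg _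

lemma fnorm_sq (A : Matrix (Fin N) (Fin T) ℝ) : fnorm A ^ 2 = finner A A :=
  Real.sq_sqrt (finner_self_nonneg A)

lemma finner_eq_trace_mul_transpose (A B : Matrix (Fin N) (Fin T) ℝ) :
    finner A B = (A * Bᵀ).trace := by
  simp [finner, trace, mul_apply]

lemma finner_transpose_mul_transpose_mul {U : Matrix (Fin N) (Fin N) ℝ}
    (hU : U * Uᵀ = 1) (A B : Matrix (Fin N) (Fin T) ℝ) :
    finner (Uᵀ * A) (Uᵀ * B) = finner A B := by
  rw [finner_eq_trace_mul_transpose, finner_eq_trace_mul_transpose, transpose_mul,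
    transpose_transpose, Matrix.mul_assoc, trace_mul_comm]
  simp only [Matrix.mul_assoc, hU, Matrix.mul_one]

lemma fnorm_sub_sq (A B : Matrix (Fin N) (Fin T) ℝ) :
    fnorm (A - B) ^ 2 = fnorm A ^ 2 - 2 * finner A B + fnorm B ^ 2 := by
  simp only [fnorm_sq, finner, Matrix.sub_apply, Finset.mul_sum, ← Finset.sum_sub_distrib,
    ← Finset.sum_add_distrib]
  exact Finset.sum_congr rfl fun _ _ => Finset.sum_congr rfl fun _ _ => by ring

lemma fnorm_sq_le_two_mul_finner {Δ E : Matrix (Fin N) (Fin T) ℝ}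
    (h : fnorm (E - Δ) ^ 2 ≤ fnorm E ^ 2) : fnorm Δ ^ 2 ≤ 2 * finner Δ E := by
  rw [fnorm_sub_sq, finner_comm] at h
  linarith

end Frobenius

lemma sum_sq_eq_dotProduct {n : Type*} [Fintype n] (v : n → ℝ) : ∑ i, v i ^ 2 = v ⬝ᵥ v := by
  simp only [dotProduct, sq]

section RealSpectral

variable {n : Type*} [Fintype n] [DecidableEq n]

lemma Matrix.mul_transpose_self_of_mem_unitaryGroup {U : Matrix n n ℝ}
    (hU : U ∈ unitaryGroup n ℝ) : U * Uᵀ = 1 := by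
  simpa [star_eq_conjTranspose] using mem_unitaryGroup_iff.mp hU

lemma Matrix.transpose_mul_self_of_mem_unitaryGroup {U : Matrix n n ℝ}
    (hU : U ∈ unitaryGroup n ℝ) : Uᵀ * U = 1 := by
  simpa [star_eq_conjTranspose] using mem_unitaryGroup_iff'.mp hU

lemma Matrix.IsHermitian.transpose_eigenvectorUnitary_mul_mul_eigenvectorUnitary
    {B : Matrix n n ℝ} (hB : B.IsHermitian) :
    (hB.eigenvectorUnitary : Matrix n n ℝ)ᵀ * B * hB.eigenvectorUnitary =
      diagonal hB.eigenvalues := by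
  simpa [Unitary.conjStarAlgAut_star_apply, star_eq_conjTranspose] using
    hB.conjStarAlgAut_star_eigenvectorUnitary

lemma Matrix.IsHermitian.dotProduct_mulVec_le {B : Matrix n n ℝ} (hB : B.IsHermitian) {c : ℝ}
    (hc : ∀ i, hB.eigenvalues i ≤ c) (x : n → ℝ) : x ⬝ᵥ (B *ᵥ x) ≤ c * (x ⬝ᵥ x) := by
  set U : Matrix n n ℝ := (hB.eigenvectorUnitary : Matrix n n ℝ)
  have hUUt : U * Uᵀ = 1 := mul_transpose_self_of_mem_unitaryGroup hB.eigenvectorUnitary.2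
  have hUtU : Uᵀ * U = 1 := transpose_mul_self_of_mem_unitaryGroup hB.eigenvectorUnitary.2
  set y := Uᵀ *ᵥ x
  have hquad (M : Matrix n n ℝ) : x ⬝ᵥ (M *ᵥ x) = y ⬝ᵥ ((Uᵀ * M * U) *ᵥ y) := by
    have hx : x = U *ᵥ y := by rw [mulVec_mulVec, hUUt, one_mulVec]
    rw [← mulVec_mulVec, ← mulVec_mulVec, dotProduct_mulVec y, vecMul_transpose, ← hx]
  have hnorm : x ⬝ᵥ x = y ⬝ᵥ y := by simpa [hUtU] using hquad 1
  calc x ⬝ᵥ (B *ᵥ x) = ∑ j, hB.eigenvalues j * y j ^ 2 := by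
        rw [hquad, hB.transpose_eigenvectorUnitary_mul_mul_eigenvectorUnitary]
        simp only [dotProduct, mulVec_diagonal, sq]
        exact Finset.sum_congr rfl fun _ _ => by ring
    _ ≤ ∑ j, c * y j ^ 2 :=
        Finset.sum_le_sum fun j _ => mul_le_mul_of_nonneg_right (hc j) (sq_nonneg _)
    _ = c * (x ⬝ᵥ x) := by
        rw [← Finset.mul_sum, hnorm]
        simp only [dotProduct, sq]

end RealSpectral

section SingularValues

variable {N T : ℕ}

lemma sval_nonneg (A : Matrix (Fin N) (Fin T) ℝ) (j : ℕ) : 0 ≤ sval A j := by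
  unfold sval
  split
  · exact Real.sqrt_nonneg _
  · exact le_rfl

lemma s1_nonneg (A : Matrix (Fin N) (Fin T) ℝ) : 0 ≤ s1 A :=
  sval_nonneg A 0

lemma eigenvalues_mul_conjTranspose_le_s1_sq (A : Matrix (Fin N) (Fin T) ℝ) (i : Fin N) :
    (isHermitian_mul_conjTranspose_self A).eigenvalues i ≤ s1 A ^ 2 := by
  set μ := (isHermitian_mul_conjTranspose_self A).eigenvalues
  set σ := Tuple.sort μ
  have hN : 0 < N := i.pos
  have hs1 : s1 A ^ 2 = μ (σ (⟨0, hN⟩ : Fin N).rev) := by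
    rw [s1, sval, dif_pos hN, Real.sq_sqrt (eigenvalues_self_mul_conjTranspose_nonneg A _)]
  rw [hs1, ← Equiv.apply_symm_apply σ i]
  refine Tuple.monotone_sort μ ?_
  have := (σ.symm i).isLt
  simp only [Fin.le_def, Fin.val_rev]
  omega

lemma nucNorm_eq_sum_sqrt_eigenvalues (A : Matrix (Fin N) (Fin T) ℝ) :
    nucNorm A = ∑ i, √((isHermitian_mul_conjTranspose_self A).eigenvalues i) := by
  set μ := (isHermitian_mul_conjTranspose_self A).eigenvalues
  rw [nucNorm, Finset.sum_range fun j => sval A j]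
  simp only [sval, Fin.is_lt, dif_pos, Fin.eta]
  exact Equiv.sum_comp (Fin.revPerm.trans (Tuple.sort μ)) fun i => √(μ i)

lemma fnorm_sq_eq_sum_eigenvalues (A : Matrix (Fin N) (Fin T) ℝ) :
    fnorm A ^ 2 = ∑ i, (isHermitian_mul_conjTranspose_self A).eigenvalues i := by
  rw [fnorm_sq, finner_eq_trace_mul_transpose, ← conjTranspose_eq_transpose_of_trivial,
    (isHermitian_mul_conjTranspose_self A).trace_eq_sum_eigenvalues]
  rfl

lemma vecMul_dotProduct_vecMul_le_s1_sq (A : Matrix (Fin N) (Fin T) ℝ) (x : Fin N → ℝ) :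
    (x ᵥ* A) ⬝ᵥ (x ᵥ* A) ≤ s1 A ^ 2 * (x ⬝ᵥ x) := by
  have h := (isHermitian_mul_conjTranspose_self A).dotProduct_mulVec_le
    (eigenvalues_mul_conjTranspose_le_s1_sq A) x
  rwa [← mulVec_mulVec, dotProduct_mulVec, conjTranspose_eq_transpose_of_trivial,
    mulVec_transpose] at h

/-- Diagonalise `D Dᵀ = U Λ Uᵀ` with `U` orthogonal: the `k`-th rows of `Uᵀ D` and `Uᵀ E` have
squared norms `λ_k` and at most `s₁(E)²`, so Cauchy–Schwarz row by row gives trace duality. -/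
lemma finner_le_nucNorm_mul_s1 (D E : Matrix (Fin N) (Fin T) ℝ) :
    finner D E ≤ nucNorm D * s1 E := by
  have hD := isHermitian_mul_conjTranspose_self D
  set U : Matrix (Fin N) (Fin N) ℝ := (hD.eigenvectorUnitary : Matrix (Fin N) (Fin N) ℝ)
  have hrowD (k : Fin N) : (Uᵀ k ᵥ* D) ⬝ᵥ (Uᵀ k ᵥ* D) = hD.eigenvalues k := by
    calc (Uᵀ k ᵥ* D) ⬝ᵥ (Uᵀ k ᵥ* D) = (Uᵀ * D * (Uᵀ * D)ᵀ) k k := rfl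
      _ = (Uᵀ * (D * Dᴴ) * U) k k := by
        rw [transpose_mul, transpose_transpose, conjTranspose_eq_transpose_of_trivial]
        simp only [Matrix.mul_assoc]
      _ = hD.eigenvalues k := by
        rw [hD.transpose_eigenvectorUnitary_mul_mul_eigenvectorUnitary, diagonal_apply_eq]
  have hrowE (k : Fin N) : (Uᵀ k ᵥ* E) ⬝ᵥ (Uᵀ k ᵥ* E) ≤ s1 E ^ 2 := by
    have hunit : Uᵀ k ⬝ᵥ Uᵀ k = 1 :=
      (congrFun (congrFun (transpose_mul_self_of_mem_unitaryGroup
        hD.eigenvectorUnitary.2) k) k).trans (one_apply_eq k)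
    simpa [hunit] using vecMul_dotProduct_vecMul_le_s1_sq E (Uᵀ k)
  calc finner D E = ∑ k, (Uᵀ k ᵥ* D) ⬝ᵥ (Uᵀ k ᵥ* E) :=
        (finner_transpose_mul_transpose_mul
          (mul_transpose_self_of_mem_unitaryGroup hD.eigenvectorUnitary.2) D E).symm
    _ ≤ ∑ k, √(hD.eigenvalues k) * s1 E := by
        refine Finset.sum_le_sum fun k _ => (Real.sum_mul_le_sqrt_mul_sqrt _ _ _).trans ?_
        rw [sum_sq_eq_dotProduct, sum_sq_eq_dotProduct, hrowD]
        gcongr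
        exact (Real.sqrt_le_sqrt (hrowE k)).trans_eq (Real.sqrt_sq (s1_nonneg E))
    _ = nucNorm D * s1 E := by rw [nucNorm_eq_sum_sqrt_eigenvalues, Finset.sum_mul]

lemma nucNorm_le_sqrt_rank_mul_fnorm (A : Matrix (Fin N) (Fin T) ℝ) :
    nucNorm A ≤ √A.rank * fnorm A := by
  rw [nucNorm_eq_sum_sqrt_eigenvalues, fnorm, ← fnorm_sq, fnorm_sq_eq_sum_eigenvalues]
  set μ := (isHermitian_mul_conjTranspose_self A).eigenvalues
  have hμ : ∀ i, 0 ≤ μ i := eigenvalues_self_mul_conjTranspose_nonneg A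
  set s := Finset.univ.filter fun i => μ i ≠ 0
  have hcard : s.card = A.rank := by
    rw [← rank_self_mul_conjTranspose,
      (isHermitian_mul_conjTranspose_self A).rank_eq_card_non_zero_eigs, Fintype.card_subtype]
  calc ∑ i, √(μ i) = ∑ i ∈ s, √1 * √(μ i) := by
        rw [Finset.sum_filter_of_ne]
        · simp only [Real.sqrt_one, one_mul]
        · intro i _ hi h0
          simp [h0] at hi
    _ ≤ √(∑ i ∈ s, 1) * √(∑ i ∈ s, μ i) := Real.sum_sqrt_mul_sqrt_le s (fun _ => zero_le_one) hμ
    _ ≤ √A.rank * √(∑ i, μ i) := by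
        rw [Finset.sum_const, hcard, nsmul_one]
        exact mul_le_mul_of_nonneg_left (Real.sqrt_le_sqrt
          (Finset.sum_le_sum_of_subset_of_nonneg (Finset.subset_univ s) fun i _ _ => hμ i))
          (Real.sqrt_nonneg _)

end SingularValues

theorem Matrix.rank_sub_le {m n K : Type*} [Finite m] [Fintype n] [Field K] (A B : Matrix m n K) :
    (A - B).rank ≤ A.rank + B.rank := by
  have hrange : LinearMap.range (A - B).mulVecLin ≤
      LinearMap.range A.mulVecLin ⊔ LinearMap.range B.mulVecLin := by
    rintro _ ⟨v, rfl⟩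
    rw [mulVecLin_apply, sub_mulVec]
    exact sub_mem (Submodule.mem_sup_left ⟨v, rfl⟩) (Submodule.mem_sup_right ⟨v, rfl⟩)
  exact (Submodule.finrank_mono hrange).trans (Submodule.finrank_add_le_finrank_add_finrank _ _)

section ErrorBounds

variable {N T : ℕ} {Δ E : Matrix (Fin N) (Fin T) ℝ} {r : ℝ}

lemma nucNorm_le_sqrt_mul_fnorm_of_rank_le (hrank : (Δ.rank : ℝ) ≤ r) :
    nucNorm Δ ≤ √r * fnorm Δ :=
  (nucNorm_le_sqrt_rank_mul_fnorm Δ).trans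
    (mul_le_mul_of_nonneg_right (Real.sqrt_le_sqrt hrank) (fnorm_nonneg Δ))

lemma fnorm_le_of_fnorm_sq_le_two_mul_finner (hrank : (Δ.rank : ℝ) ≤ r)
    (h : fnorm Δ ^ 2 ≤ 2 * finner Δ E) : fnorm Δ ≤ 2 * √r * s1 E := by
  have hsq : fnorm Δ ^ 2 ≤ (2 * √r * s1 E) * fnorm Δ :=
    calc fnorm Δ ^ 2 ≤ 2 * (nucNorm Δ * s1 E) :=
          h.trans (by gcongr; exact finner_le_nucNorm_mul_s1 Δ E)
      _ ≤ 2 * (√r * fnorm Δ * s1 E) := by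
          gcongr
          · exact s1_nonneg E
          · exact nucNorm_le_sqrt_mul_fnorm_of_rank_le hrank
      _ = (2 * √r * s1 E) * fnorm Δ := by ring
  have hc : 0 ≤ 2 * √r * s1 E := mul_nonneg (by positivity) (s1_nonneg E)
  nlinarith [fnorm_nonneg Δ]

lemma nucNorm_le_of_fnorm_sq_le_two_mul_finner (hrank : (Δ.rank : ℝ) ≤ r)
    (h : fnorm Δ ^ 2 ≤ 2 * finner Δ E) : nucNorm Δ ≤ 2 * r * s1 E :=
  calc nucNorm Δ ≤ √r * fnorm Δ := nucNorm_le_sqrt_mul_fnorm_of_rank_le hrank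
    _ ≤ √r * (2 * √r * s1 E) :=
        mul_le_mul_of_nonneg_left (fnorm_le_of_fnorm_sq_le_two_mul_finner hrank h)
          (Real.sqrt_nonneg r)
    _ = 2 * (√r * √r) * s1 E := by ring
    _ = 2 * r * s1 E := by rw [Real.mul_self_sqrt ((Nat.cast_nonneg _).trans hrank)]

end ErrorBounds

/-- Error bounds for the rank-constrained least-squares estimator: if `Γ̂` minimizes
`‖Γ + E − G‖_F²` over matrices `G` of rank at most `R`, and `rank Γ ≤ R`, then
`‖Γ̂ − Γ‖_F ≤ 2√(2R) · s₁(E)` and `‖Γ̂ − Γ‖_* ≤ 4R · s₁(E)`. -/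
theorem rank_constrained_LS_error_bounds {N T : ℕ} (R : ℕ)
    (Γ E Γhat : Matrix (Fin N) (Fin T) ℝ)
    (hΓ : Γ.rank ≤ R) (hΓhat : Γhat.rank ≤ R)
    (hmin : ∀ G : Matrix (Fin N) (Fin T) ℝ, G.rank ≤ R →
      (fnorm (Γ + E - Γhat)) ^ 2 ≤ (fnorm (Γ + E - G)) ^ 2) :
    fnorm (Γhat - Γ) ≤ 2 * Real.sqrt (2 * (R : ℝ)) * s1 E ∧
    nucNorm (Γhat - Γ) ≤ 4 * (R : ℝ) * s1 E := by
  have hrank : ((Γhat - Γ).rank : ℝ) ≤ 2 * R := by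
    have := (rank_sub_le Γhat Γ).trans (add_le_add hΓhat hΓ)
    rw [two_mul]
    exact_mod_cast this
  have hbasic : fnorm (Γhat - Γ) ^ 2 ≤ 2 * finner (Γhat - Γ) E :=
    fnorm_sq_le_two_mul_finner (by simpa [sub_sub_eq_add_sub, add_comm] using hmin Γ hΓ)
  refine ⟨fnorm_le_of_fnorm_sq_le_two_mul_finner hrank hbasic, ?_⟩
  convert nucNorm_le_of_fnorm_sq_le_two_mul_finner hrank hbasic using 2
  ring
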